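/- Proposition: There exists a constant d ∈ ℕ and a partial computable function F such that for all binary strings x and y with C(y) < C(C(x)|x) − d, F(x, C(x), y) is defined and equals C(y). In other words, the pair (x, C(x)) uniformly computes the Kolmogorov complexity of every string y whose complexity is below C(C(x)|x) − d. -/

import Mathlib

/-- Conditional plain Kolmogorov complexity of `x` given `y`, with respect to the
machine `U` (which takes a pair (conditional input, program)). -/
noncomputable def condC (U : List Bool × List Bool →. List Bool) (x y : List Bool) : ℕ :=
  sInf {k : ℕ | ∃ p : List Bool, p.length = k ∧ x ∈ U (y, p)}

/-- Plain (unconditional) Kolmogorov complexity with respect to `U`. -/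
noncomputable def plainC (U : List Bool × List Bool →. List Bool) (x : List Bool) : ℕ :=
  condC U x []

/-- `U` is a partial computable, additively optimal (universal) machine. -/
def AdditivelyOptimal (U : List Bool × List Bool →. List Bool) : Prop :=
  Partrec U ∧
    ∀ V : List Bool × List Bool →. List Bool, Partrec V →
      ∃ c : ℕ, ∀ y p x, x ∈ V (y, p) →
        ∃ q : List Bool, x ∈ U (y, q) ∧ q.length ≤ p.length + c

/-- The string of `n` zeros; `C(n)` is the complexity of this string. -/
def zeros (n : ℕ) : List Bool := List.replicate n false

/-- A natural number viewed as a binary string (for complexities like `C(C(x)|x)`). -/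
def natStr (k : ℕ) : List Bool := k.bits

/-- The `i`-th binary digit of a real number. -/
noncomputable def binDigit (α : ℝ) (i : ℕ) : Bool :=
  decide (⌊α * 2 ^ (i + 1)⌋ % 2 = 1)

/-- The string of the first `n` binary digits of a real number. -/
noncomputable def binPrefix (α : ℝ) (n : ℕ) : List Bool :=
  (List.range n).map (binDigit α)

/-- `q` is a computable nondecreasing rational sequence converging to `α ∈ [0,1]`;
this witnesses that `α` is a left c.e. real. -/
structure LeftCEApprox (α : ℝ) (q : ℕ → ℚ) : Prop where
  nonneg : 0 ≤ α
  le_one : α ≤ 1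
  comp : Computable q
  mono : Monotone q
  tendsto : Filter.Tendsto (fun n => (q n : ℝ)) Filter.atTop (nhds α)

/-- Partial recursiveness relative to an oracle `g` (relativized `Nat.Partrec`). -/
inductive RecursiveInOracle (g : ℕ →. ℕ) : (ℕ →. ℕ) → Prop
  | oracle : RecursiveInOracle g g
  | zero : RecursiveInOracle g (pure 0)
  | succ : RecursiveInOracle g ↑Nat.succ
  | left : RecursiveInOracle g ↑fun n : ℕ => (Nat.unpair n).1
  | right : RecursiveInOracle g ↑fun n : ℕ => (Nat.unpair n).2
  | pair {f h : ℕ →. ℕ} : RecursiveInOracle g f → RecursiveInOracle g h →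
      RecursiveInOracle g fun n => Nat.pair <$> f n <*> h n
  | comp {f h : ℕ →. ℕ} : RecursiveInOracle g f → RecursiveInOracle g h →
      RecursiveInOracle g fun n => h n >>= f
  | prec {f h : ℕ →. ℕ} : RecursiveInOracle g f → RecursiveInOracle g h →
      RecursiveInOracle g (Nat.unpaired fun a n =>
        n.rec (f a) fun y IH => do let i ← IH; h (Nat.pair a (Nat.pair y i)))
  | rfind {f : ℕ →. ℕ} : RecursiveInOracle g f →
      RecursiveInOracle g fun a => Nat.rfind fun n => (fun m => m = 0) <$> f (Nat.pair a n)

/-- The binary digit sequence of a real, as an oracle. -/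
noncomputable def digitOracle (α : ℝ) : ℕ →. ℕ :=
  fun n => Part.some (cond (binDigit α n) 1 0)

open Classical in
/-- The halting problem, as a (characteristic) function on codes of programs. -/
noncomputable def haltingFun : ℕ → ℕ := fun n =>
  if ((Denumerable.ofNat Nat.Partrec.Code n).eval n).Dom then 1 else 0

/-- The halting problem is Turing reducible to the binary digit sequence of `α`. -/
def TuringComplete (α : ℝ) : Prop :=
  RecursiveInOracle (digitOracle α) ↑haltingFun

/-!
Run `U` in stages. Let `t₀` be the first stage at which some program of length `C(x)` for `x`
has converged, and let `F(x, C(x), y)` be the least length of a program for `y` converged by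
stage `t₀`. If a shortest program `q` for `y` converges by stage `t₀`, this is `C(y)`. Otherwise
`q` converges after `t₀`, so from `x` and `q` one computes `C(x)`: run `q` until it halts and take
the least length of a program for `x` converged by then. Hence `C(C(x)|x) ≤ |q| + O(1)
= C(y) + O(1)`, which the hypothesis rules out once `d` exceeds the constant.
-/

open Encodable Nat.Partrec

structure IsStageApprox {α σ : Type*} [Primcodable α] [Primcodable σ] (f : α →. σ)
    (g : ℕ → α → Option σ) : Prop where
  primrec : Primrec₂ g
  sound {t : ℕ} {a : α} {b : σ} : g t a = some b → b ∈ f a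
  complete {a : α} {b : σ} : b ∈ f a → ∃ t, g t a = some b
  mono {s t : ℕ} {a : α} {b : σ} : s ≤ t → g s a = some b → g t a = some b
  /-- Stage `t` runs only inputs with code below `t`, so searches among converged inputs are
  bounded. -/
  encode_lt {t : ℕ} {a : α} {b : σ} : g t a = some b → encode a < t

theorem Partrec.exists_isStageApprox {α σ : Type*} [Primcodable α] [Primcodable σ]
    {f : α →. σ} (hf : Partrec f) : ∃ g, IsStageApprox f g := by
  obtain ⟨c, hc⟩ := Code.exists_code.1 hf
  have mem_eval {a : α} {v : ℕ} :
      v ∈ Code.eval c (encode a) ↔ ∃ b ∈ f a, encode b = v := by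
    simp only [hc, encodek, Part.coe_some, Part.bind_some]
    exact Part.mem_map_iff _
  refine ⟨fun t a => (Code.evaln t c (encode a)).bind decode, ⟨?_, ?_, ?_, ?_, ?_⟩⟩
  · exact Primrec.option_bind
      (Code.primrec_evaln.comp ((Primrec.fst.pair (Primrec.const c)).pair
        (Primrec.encode.comp Primrec.snd)))
      (Primrec.decode.comp Primrec.snd).to₂
  · intro t a b h
    obtain ⟨v, hv, hdec⟩ := Option.bind_eq_some_iff.1 h
    obtain ⟨b', hb', rfl⟩ := mem_eval.1 (Code.evaln_sound hv)
    rw [encodek, Option.some_inj] at hdec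
    exact hdec ▸ hb'
  · intro a b hb
    obtain ⟨t, ht⟩ := Code.evaln_complete.1 (mem_eval.2 ⟨b, hb, rfl⟩)
    exact ⟨t, by simp [Option.mem_def.1 ht, encodek]⟩
  · intro s t a b hst h
    obtain ⟨v, hv, hdec⟩ := Option.bind_eq_some_iff.1 h
    exact Option.bind_eq_some_iff.2 ⟨v, Code.evaln_mono hst hv, hdec⟩
  · intro t a b h
    obtain ⟨v, hv, -⟩ := Option.bind_eq_some_iff.1 h
    exact Code.evaln_bound hv

theorem Nat.bits_eq_bodd_cons_div2 {n : ℕ} (hn : n ≠ 0) : n.bits = n.bodd :: n.div2.bits := by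
  conv_lhs => rw [← Nat.bit_bodd_div2 n]
  refine Nat.bits_append_bit _ _ fun h => ?_
  by_contra hodd
  exact hn (by rw [← Nat.bit_bodd_div2 n, h, Bool.eq_false_iff.2 hodd]; rfl)

theorem primrec_natStr : Primrec natStr := by
  refine (Primrec.nat_strong_rec (fun (_ : Unit) n => natStr n)
    (g := fun _ l => some (if l.length = 0 then [] else
      l.length.bodd :: l.getD l.length.div2 [])) ?_ ?_).comp (Primrec.const ()) Primrec.id
  · refine Primrec.option_some.comp (Primrec.ite ?_ (Primrec.const []) ?_)
    · exact Primrec.eq.comp (Primrec.list_length.comp Primrec.snd) (Primrec.const 0)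
    · exact Primrec.list_cons.comp
        (Primrec.nat_bodd.comp (Primrec.list_length.comp Primrec.snd))
        ((Primrec.list_getD []).comp Primrec.snd
          (Primrec.nat_div2.comp (Primrec.list_length.comp Primrec.snd)))
  · intro _ n
    rcases eq_or_ne n 0 with rfl | hn
    · rfl
    · have hlt : n.div2 < n := by rw [Nat.div2_val]; omega
      simp [hn, natStr, Nat.bits_eq_bodd_cons_div2 hn, List.getD_eq_getElem?_getD, hlt]

section Complexity

variable {U : List Bool × List Bool →. List Bool}

theorem condC_le_length {x y p : List Bool} (h : x ∈ U (y, p)) : condC U x y ≤ p.length :=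
  Nat.sInf_le ⟨p, rfl, h⟩

theorem AdditivelyOptimal.exists_length_eq_plainC (hU : AdditivelyOptimal U) (w : List Bool) :
    ∃ p : List Bool, p.length = plainC U w ∧ w ∈ U ([], p) := by
  obtain ⟨c, hc⟩ := hU.2 (fun _ => Part.some w) (Partrec.const' _)
  obtain ⟨p, hp, -⟩ := hc [] [] w (Part.mem_some w)
  exact Nat.sInf_mem (s := {k | ∃ p : List Bool, p.length = k ∧ w ∈ U ([], p)})
    ⟨p.length, p, rfl, hp⟩

end Complexity

section Stages

variable {α σ : Type*} [Primcodable α] [Primcodable σ] {f : α →. σ}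
  {g : ℕ → α → Option σ}

def haltStage (g : ℕ → α → Option σ) (a : α) : Part ℕ :=
  Nat.rfind fun t => Part.some (g t a).isSome

theorem IsStageApprox.exists_mem_haltStage (hg : IsStageApprox f g) {a : α} {b : σ}
    (hb : b ∈ f a) : ∃ t ∈ haltStage g a, g t a = some b := by
  obtain ⟨s, hs⟩ := hg.complete hb
  obtain ⟨t, ht, -⟩ :=
    Nat.rfind_min' (p := fun t => (g t a).isSome) (m := s) (by simp [hs])
  have halted : (g t a).isSome := by simpa using Nat.rfind_spec ht
  obtain ⟨b', hb'⟩ := Option.isSome_iff_exists.1 halted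
  exact ⟨t, ht, hb' ▸ congrArg some (Part.mem_unique (hg.sound hb') hb)⟩

theorem IsStageApprox.partrec_haltStage (hg : IsStageApprox f g) : Partrec (haltStage g) :=
  Partrec.rfind (Primrec.option_isSome.comp (hg.primrec.comp Primrec.snd Primrec.fst)).to_comp

end Stages

section StageComplexity

variable {U : List Bool × List Bool →. List Bool} {f : List Bool →. List Bool}
  {g : ℕ → List Bool → Option (List Bool)}

def FoundBy (g : ℕ → List Bool → Option (List Bool)) (t : ℕ) (w : List Bool) (m : ℕ) :
    Prop :=
  ∃ p : List Bool, p.length = m ∧ g t p = some w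

open Classical in
noncomputable def stageC (g : ℕ → List Bool → Option (List Bool)) (t : ℕ) (w : List Bool) :
    Part ℕ :=
  Nat.rfind fun m => Part.some (decide (FoundBy g t w m))

open Classical in
noncomputable def foundStage (g : ℕ → List Bool → Option (List Bool)) (w : List Bool)
    (m : ℕ) : Part ℕ :=
  Nat.rfind fun t => Part.some (decide (FoundBy g t w m))

theorem FoundBy.mono (hg : IsStageApprox f g) {s t : ℕ} {w : List Bool}
    {m : ℕ} (hst : s ≤ t) : FoundBy g s w m → FoundBy g t w m
  | ⟨p, hl, hp⟩ => ⟨p, hl, hg.mono hst hp⟩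

theorem plainC_le_of_foundBy (hg : IsStageApprox (fun p => U ([], p)) g) {t : ℕ}
    {w : List Bool} {m : ℕ} : FoundBy g t w m → plainC U w ≤ m
  | ⟨_, hl, hp⟩ => hl ▸ condC_le_length (hg.sound hp)

theorem plainC_mem_stageC (hg : IsStageApprox (fun p => U ([], p)) g) {t : ℕ}
    {w : List Bool} (h : FoundBy g t w (plainC U w)) : plainC U w ∈ stageC g t w := by
  refine Nat.mem_rfind.2 ⟨by simpa using h, fun {m} hm => ?_⟩
  have : ¬FoundBy g t w m := fun h' => absurd (plainC_le_of_foundBy hg h') (not_le.2 hm)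
  simpa using this

theorem exists_mem_foundStage {s : ℕ} {w : List Bool} {m : ℕ} (h : FoundBy g s w m) :
    ∃ t ∈ foundStage g w m, FoundBy g t w m := by
  classical
  obtain ⟨t, ht, -⟩ :=
    Nat.rfind_min' (p := fun t => decide (FoundBy g t w m)) (m := s) (by simpa)
  exact ⟨t, ht, by simpa using Nat.rfind_spec ht⟩

theorem IsStageApprox.primrecPred_foundBy (hg : IsStageApprox f g) :
    PrimrecPred fun x : (ℕ × List Bool) × ℕ => FoundBy g x.1.1 x.1.2 x.2 := by
  let found (k : ℕ) (x : (ℕ × List Bool) × ℕ) : Option (List Bool) :=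
    (decode k).bind fun p => if p.length = x.2 then g x.1.1 p else none
  have found_primrec : Primrec₂ found :=
    Primrec.option_bind (Primrec.decode.comp Primrec.fst) <| Primrec.ite
      (Primrec.eq.comp (Primrec.list_length.comp Primrec.snd)
        (Primrec.snd.comp (Primrec.snd.comp Primrec.fst)))
      (hg.primrec.comp (Primrec.fst.comp (Primrec.fst.comp (Primrec.snd.comp Primrec.fst)))
        Primrec.snd)
      (Primrec.const none)
  refine (PrimrecRel.exists_mem_list (R := fun k x => found k x = some x.1.2)
    (Primrec.eq.comp found_primrec (Primrec.option_some.comp (Primrec.snd.comp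
      (Primrec.fst.comp Primrec.snd))))).comp
    (Primrec.list_range.comp (Primrec.fst.comp Primrec.fst)) Primrec.id |>.of_eq fun x => ?_
  constructor
  · rintro ⟨k, -, hk⟩
    obtain ⟨p, -, hp⟩ := Option.bind_eq_some_iff.1 hk
    split_ifs at hp with hl
    exact ⟨p, hl, hp⟩
  · rintro ⟨p, hl, hp⟩
    exact ⟨encode p, List.mem_range.2 (hg.encode_lt hp), by simp [found, hl, hp]⟩

theorem IsStageApprox.partrec_stageC (hg : IsStageApprox f g) :
    Partrec fun x : ℕ × List Bool => stageC g x.1 x.2 := by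
  classical
  exact Partrec.rfind (hg.primrecPred_foundBy.decide).to_comp.partrec

theorem IsStageApprox.partrec_foundStage (hg : IsStageApprox f g) :
    Partrec fun x : List Bool × ℕ => foundStage g x.1 x.2 := by
  classical
  exact Partrec.rfind (hg.primrecPred_foundBy.decide.comp
    ((Primrec.snd.pair (Primrec.fst.comp Primrec.fst)).pair
      (Primrec.snd.comp Primrec.fst))).to_comp.partrec

noncomputable def stageCAfterFound (g : ℕ → List Bool → Option (List Bool)) :
    List Bool × ℕ × List Bool →. ℕ :=
  fun a => (foundStage g a.1 a.2.1).bind fun t => stageC g t a.2.2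

noncomputable def stageCAfterHalt (g : ℕ → List Bool → Option (List Bool)) :
    List Bool × List Bool →. List Bool :=
  fun a => (haltStage g a.2).bind fun t => (stageC g t a.1).map natStr

theorem IsStageApprox.partrec_stageCAfterFound (hg : IsStageApprox f g) :
    Partrec (stageCAfterFound g) :=
  Partrec.bind
    (hg.partrec_foundStage.comp (Computable.fst.pair (Computable.fst.comp Computable.snd)))
    (hg.partrec_stageC.comp
      (Computable.snd.pair (Computable.snd.comp (Computable.snd.comp Computable.fst))))

theorem IsStageApprox.partrec_stageCAfterHalt (hg : IsStageApprox f g) :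
    Partrec (stageCAfterHalt g) :=
  Partrec.bind (hg.partrec_haltStage.comp Computable.snd)
    (Partrec.map
      (hg.partrec_stageC.comp (Computable.snd.pair (Computable.fst.comp Computable.fst)))
      (primrec_natStr.comp Primrec.snd).to_comp.to₂)

theorem plainC_mem_stageCAfterFound_or_mem_stageCAfterHalt (hU : AdditivelyOptimal U)
    (hg : IsStageApprox (fun p => U ([], p)) g) (x : List Bool) {y q : List Bool}
    (hq : y ∈ U ([], q)) (hq_len : q.length = plainC U y) :
    plainC U y ∈ stageCAfterFound g (x, plainC U x, y) ∨
      natStr (plainC U x) ∈ stageCAfterHalt g (x, q) := by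
  obtain ⟨p, hp_len, hp⟩ := hU.exists_length_eq_plainC x
  obtain ⟨s, hs⟩ := hg.complete hp
  obtain ⟨t₀, ht₀, hx_found⟩ := exists_mem_foundStage (g := g) ⟨p, hp_len, hs⟩
  obtain ⟨t, ht, hy_halt⟩ := hg.exists_mem_haltStage hq
  rcases le_total t t₀ with h | h
  · have hy_found : FoundBy g t₀ y (plainC U y) := ⟨q, hq_len, hg.mono h hy_halt⟩
    exact .inl (Part.mem_bind_iff.2 ⟨t₀, ht₀, plainC_mem_stageC hg hy_found⟩)
  · exact .inr (Part.mem_bind_iff.2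
      ⟨t, ht, Part.mem_map _ (plainC_mem_stageC hg (hx_found.mono hg h))⟩)

end StageComplexity

/-- Proposition: there is a constant `d` and a partial computable `F` such that for all
strings `x, y` with `C(y) < C(C(x)|x) - d`, `F(x, C(x), y)` is defined and equals
`C(y)`. -/
theorem pair_with_complexity_computes_complexities
    (U : List Bool × List Bool →. List Bool) (hU : AdditivelyOptimal U) :
    ∃ (d : ℕ) (F : List Bool × ℕ × List Bool →. ℕ), Partrec F ∧
      ∀ x y : List Bool,
        plainC U y + d < condC U (natStr (plainC U x)) x →
          plainC U y ∈ F (x, plainC U x, y) := by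
  obtain ⟨g, hg⟩ := (hU.1.comp ((Computable.const []).pair Computable.id)).exists_isStageApprox
  obtain ⟨d, hd⟩ := hU.2 _ hg.partrec_stageCAfterHalt
  refine ⟨d, stageCAfterFound g, hg.partrec_stageCAfterFound, fun x y hxy => ?_⟩
  obtain ⟨q, hq_len, hq⟩ := hU.exists_length_eq_plainC y
  refine (plainC_mem_stageCAfterFound_or_mem_stageCAfterHalt hU hg x hq hq_len).resolve_right
    fun hV => ?_
  obtain ⟨q', hq', hq'_len⟩ := hd x q _ hV
  have := condC_le_length hq'
  omega
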